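/- Let $x$ be a set of basic invariants compatible at $q$ with a $(g,\zeta)$-graded coordinate system $z$, for an admissible triplet $(g,\zeta,q)$. For $a \in \mathbb{Z}_{\geq 0}^n$ and $b \in \mathcal{Z}$ (i.e. $b_\alpha = 0$ whenever $d_\alpha = d_1$): if $\frac{\partial^a x^b}{\partial z^a}(q) \neq 0$, then either ($|a| > |b|$ and $a \cdot d = b \cdot d + k d_1$ for some $k \in \mathbb{Z}_{\geq 0}$) or $a = b$. Here $x^b = \prod_\alpha (x^\alpha)^{b_\alpha}$. -/

import Mathlib

open MvPolynomial Matrix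

noncomputable section

variable {n : ℕ}

/-- Pullback of polynomials along the linear map with matrix `M`:
`(pback M F)(v) = F (M *ᵥ v)`.  The pullback `g^*F` of the paper is `pback (g⁻¹).val F`. -/
def pback (M : Matrix (Fin n) (Fin n) ℂ) :
    MvPolynomial (Fin n) ℂ →ₐ[ℂ] MvPolynomial (Fin n) ℂ :=
  aeval fun i => ∑ j, C (M i j) * X j

/-- Multi-index partial derivative `∂^a/∂z^a` of a polynomial (in the standard coordinates). -/
def mderiv (a : Fin n → ℕ) (F : MvPolynomial (Fin n) ℂ) : MvPolynomial (Fin n) ℂ :=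
  (List.finRange n).foldr (fun i acc => (fun p => pderiv i p)^[a i] acc) F

/-- The linear coordinate `z^α = ∑_j P_{α j} u^j` of the coordinate system given by `P`. -/
def coordPoly (P : GL (Fin n) ℂ) (α : Fin n) : MvPolynomial (Fin n) ℂ :=
  ∑ j, C (P.val α j) * X j

/-- `∂^a F/∂z^a` evaluated at `q`, where `z = P u` are the coordinates given by `P`. -/
def zderivAt (P : GL (Fin n) ℂ) (a : Fin n → ℕ) (F : MvPolynomial (Fin n) ℂ)
    (q : Fin n → ℂ) : ℂ :=
  eval (P.val *ᵥ q) (mderiv a (pback (P⁻¹).val F))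

/-- `g` is a (complex) reflection: it fixes a hyperplane pointwise and is not the identity. -/
def IsReflection (g : GL (Fin n) ℂ) : Prop :=
  g ≠ 1 ∧
    Module.finrank ℂ (LinearMap.range (Matrix.toLin' (g.val - 1))) = 1

/-- A finite complex reflection group: a finite subgroup generated by its reflections. -/
def IsReflectionGroup (G : Subgroup (GL (Fin n) ℂ)) : Prop :=
  Finite G ∧ Subgroup.closure {g | g ∈ G ∧ IsReflection g} = G

/-- A regular vector: it lies on no reflection hyperplane of `G`. -/
def IsRegularVec (G : Subgroup (GL (Fin n) ℂ)) (q : Fin n → ℂ) : Prop :=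
  q ≠ 0 ∧ ∀ g ∈ G, IsReflection g → g.val *ᵥ q ≠ q

/-- A `ζ`-regular element of `G`: its `ζ`-eigenspace contains a regular vector. -/
def IsZetaRegular (G : Subgroup (GL (Fin n) ℂ)) (g : GL (Fin n) ℂ) (ζ : ℂ) : Prop :=
  g ∈ G ∧ ∃ q, IsRegularVec G q ∧ g.val *ᵥ q = ζ • q

/-- A set of basic invariants of `G` with degrees `d`. -/
structure BasicInvariants (G : Subgroup (GL (Fin n) ℂ)) (d : Fin n → ℕ)
    (x : Fin n → MvPolynomial (Fin n) ℂ) : Prop where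
  pos : ∀ α, 0 < d α
  homog : ∀ α, (x α).IsHomogeneous (d α)
  invariant : ∀ g ∈ G, ∀ α, pback (g : GL (Fin n) ℂ).val (x α) = x α
  indep : AlgebraicIndependent ℂ x
  gen : ∀ F : MvPolynomial (Fin n) ℂ, (∀ g ∈ G, pback (g : GL (Fin n) ℂ).val F = F) →
    F ∈ Algebra.adjoin ℂ (Set.range x)

/-- An admissible triplet `(g, ζ, q)`; the degrees are arranged so that `d 0` is the highest. -/
structure AdmissibleTriplet [NeZero n] (G : Subgroup (GL (Fin n) ℂ)) (d : Fin n → ℕ)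
    (g : GL (Fin n) ℂ) (ζ : ℂ) (q : Fin n → ℂ) : Prop where
  prim : IsPrimitiveRoot ζ (d 0)
  reg : IsZetaRegular G g ζ
  regq : IsRegularVec G q
  eig : g.val *ᵥ q = ζ • q

/-- `P` gives a `(g,ζ)`-graded coordinate system: `g^* z^α = ζ^{d_α-1} z^α`. -/
def GradedCoords (g : GL (Fin n) ℂ) (ζ : ℂ) (d : Fin n → ℕ) (P : GL (Fin n) ℂ) : Prop :=
  ∀ α, pback (g⁻¹).val (coordPoly P α) = C (ζ ^ ((d α : ℤ) - 1)) * coordPoly P α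

/-- The multi-index `e_β`. -/
def unitIdx (β : Fin n) : Fin n → ℕ := fun j => if j = β then 1 else 0

/-- `x` is compatible with the coordinate system given by `P` at `q`:
`∂x^α/∂z^β (q) = δ^α_β`. -/
def Compatible (P : GL (Fin n) ℂ) (q : Fin n → ℂ)
    (x : Fin n → MvPolynomial (Fin n) ℂ) : Prop :=
  ∀ α β, zderivAt P (unitIdx β) (x α) q = if α = β then 1 else 0

/-- `x` is good: the derivatives `∂^a x^α/∂z^a` vanish at `q` for every `a ∈ I_α^{(0)}`. -/
def IsGood [NeZero n] (P : GL (Fin n) ℂ) (q : Fin n → ℂ) (d : Fin n → ℕ)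
    (x : Fin n → MvPolynomial (Fin n) ℂ) : Prop :=
  ∀ α (a : Fin n → ℕ), (∑ β, a β * d β) = d α → 2 ≤ ∑ β, a β →
    zderivAt P a (x α) q = 0

/-- Multi-index partial derivative of a function on `ℂ^n`. -/
def mpd (a : Fin n → ℕ) (f : (Fin n → ℂ) → ℂ) : (Fin n → ℂ) → ℂ :=
  (List.finRange n).foldr
    (fun i acc => (fun g v => fderiv ℂ g v (Pi.single i 1))^[a i] acc) f

/-- `f` is a rational function which is regular at `q`. -/
def RegRat (q : Fin n → ℂ) (f : (Fin n → ℂ) → ℂ) : Prop :=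
  ∃ p s : MvPolynomial (Fin n) ℂ, eval q s ≠ 0 ∧
    ∀ v, eval v s ≠ 0 → f v = eval v p / eval v s

/-- Condition `P(i)`: the value at `q` is diagonal and nonvanishing derivatives at `q`
satisfy `a·d + d_β = d_γ + k d_1` with `k ≥ i`. -/
def CondP [NeZero n] (d : Fin n → ℕ) (q : Fin n → ℂ) (i : ℕ)
    (M : Fin n → Fin n → (Fin n → ℂ) → ℂ) : Prop :=
  (∀ γ β, γ ≠ β → M γ β q = 0) ∧
    ∀ γ β (a : Fin n → ℕ), a ≠ 0 → mpd a (M γ β) q ≠ 0 →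
      ∃ k : ℕ, i ≤ k ∧ (∑ α, a α * d α) + d β = d γ + k * d 0

/-- Condition `Q(j,h)`: nonvanishing derivatives at `q` satisfy
`a·d + h + d_β = d_γ + k d_1` with `k ≥ j`. -/
def CondQ [NeZero n] (d : Fin n → ℕ) (q : Fin n → ℂ) (j h : ℕ)
    (M : Fin n → Fin n → (Fin n → ℂ) → ℂ) : Prop :=
  ∀ γ β (a : Fin n → ℕ), mpd a (M γ β) q ≠ 0 →
    ∃ k : ℕ, j ≤ k ∧ (∑ α, a α * d α) + h + d β = d γ + k * d 0

/-- Entrywise product of matrices of functions. -/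
def matMulF (Xm Ym : Fin n → Fin n → (Fin n → ℂ) → ℂ) :
    Fin n → Fin n → (Fin n → ℂ) → ℂ :=
  fun γ β v => ∑ ρ, Xm γ ρ v * Ym ρ β v

/-- The `(γ,β)` entry of the Jacobian matrix `J = (∂x^γ/∂z^β)`, expressed in the
coordinates `z = P u`, as a function on coordinate space. -/
def jacEntry (P : GL (Fin n) ℂ) (x : Fin n → MvPolynomial (Fin n) ℂ) (γ β : Fin n) :
    (Fin n → ℂ) → ℂ :=
  fun v => eval v (pderiv β (pback (P⁻¹).val (x γ)))
lemma pback_X (M : Matrix (Fin n) (Fin n) ℂ) (i : Fin n) :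
    pback M (X i) = ∑ j, C (M i j) * X j := by simp [pback]

lemma pback_C (M : Matrix (Fin n) (Fin n) ℂ) (c : ℂ) : pback M (C c) = C c := by
  simp [pback, algebraMap_eq]

lemma pback_pback (M N : Matrix (Fin n) (Fin n) ℂ) (F : MvPolynomial (Fin n) ℂ) :
    pback M (pback N F) = pback (N * M) F := by
  have h : (pback M).comp (pback N) = pback (N * M) := by
    apply MvPolynomial.algHom_ext
    intro i
    simp only [AlgHom.comp_apply, pback_X, map_sum, _root_.map_mul, pback_C]
    simp_rw [Finset.mul_sum, Matrix.mul_apply, map_sum, Finset.sum_mul]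
    rw [Finset.sum_comm]
    simp_rw [C_mul, mul_assoc]
  rw [← h]; rfl

def tshift (r : Fin n → ℂ) : MvPolynomial (Fin n) ℂ →ₐ[ℂ] MvPolynomial (Fin n) ℂ :=
  aeval fun i => X i + C (r i)

lemma pback_diag (c : Fin n → ℂ) (i : Fin n) :
    pback (diagonal c) (X i) = C (c i) * X i := by
  classical
  rw [pback_X]
  rw [Finset.sum_eq_single i (fun j _ hj => by simp [diagonal_apply_ne' _ hj]) (by simp)]
  simp

lemma pback_diag_eq (c : Fin n → ℂ) :
    pback (diagonal c) = aeval (R := ℂ) fun i => C (c i) * X i := by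
  apply MvPolynomial.algHom_ext
  intro i
  simp [pback_diag]

lemma pback_diag_monomial (c : Fin n → ℂ) (s : Fin n →₀ ℕ) (a : ℂ) :
    pback (diagonal c) (monomial s a) = monomial s ((∏ i, c i ^ s i) * a) := by
  rw [pback_diag_eq, aeval_monomial, monomial_eq]
  simp_rw [mul_pow, ← C_pow]
  have hprod : (∏ i, c i ^ s i) = ∏ i ∈ s.support, c i ^ s i := by
    refine (Finset.prod_subset (Finset.subset_univ _) ?_).symm
    intro i _ hi
    simp [Finsupp.notMem_support_iff.mp hi]
  rw [Finsupp.prod, Finset.prod_mul_distrib, algebraMap_eq, hprod, Finsupp.prod]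
  rw [show (∏ x ∈ s.support, C (c x ^ s x)) = C (∏ x ∈ s.support, c x ^ s x) from
    (map_prod (C : ℂ →+* MvPolynomial (Fin n) ℂ) _ _).symm, C_mul]
  ring

lemma coeff_pback_diag (c : Fin n → ℂ) (F : MvPolynomial (Fin n) ℂ) (m : Fin n →₀ ℕ) :
    coeff m (pback (diagonal c) F) = (∏ i, c i ^ m i) * coeff m F := by
  classical
  conv_lhs => rw [F.as_sum]
  rw [map_sum, coeff_sum]
  simp_rw [pback_diag_monomial, coeff_monomial]
  rw [show (∑ x ∈ F.support, if x = m then (∏ i, c i ^ x i) * coeff x F else 0)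
      = ∑ x ∈ F.support, if x = m then (∏ i, c i ^ m i) * coeff m F else 0 from
    Finset.sum_congr rfl fun x _ => by split <;> simp_all]
  rw [Finset.sum_ite_eq' F.support m fun _ => (∏ i, c i ^ m i) * coeff m F]
  split
  · rfl
  · rw [notMem_support_iff.mp ‹_›, mul_zero]

lemma pback_isHomogeneous (M : Matrix (Fin n) (Fin n) ℂ) {F : MvPolynomial (Fin n) ℂ} {k : ℕ}
    (h : F.IsHomogeneous k) : (pback M F).IsHomogeneous k := by
  have := h.aeval (fun i => ∑ j, C (M i j) * X j) (n := 1) (fun i => ?_)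
  · simpa [pback] using this
  · exact IsHomogeneous.sum _ _ _ fun j _ => (isHomogeneous_X ℂ j).C_mul _

lemma coeff_pderiv (i : Fin n) (m : Fin n →₀ ℕ) (F : MvPolynomial (Fin n) ℂ) :
    coeff m (pderiv i F) = (m i + 1 : ℕ) * coeff (m + Finsupp.single i 1) F := by
  classical
  conv_lhs => rw [F.as_sum]
  rw [map_sum, coeff_sum]
  simp_rw [pderiv_monomial, coeff_monomial]
  rw [Finset.sum_eq_single (m + Finsupp.single i 1)
    (fun s hs hne => ?_) (fun h => ?_)]
  · rw [if_pos (by rw [add_tsub_cancel_right])]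
    simp only [Pi.add_apply, Finsupp.coe_add, Finsupp.single_eq_same]
    push_cast
    ring
  · split
    · rename_i heq
      by_cases hsi : s i = 0
      · simp [hsi]
      · exfalso
        apply hne
        rw [← heq, tsub_add_cancel_of_le]
        rwa [Finsupp.single_le_iff, Nat.one_le_iff_ne_zero]
    · rfl
  · rw [notMem_support_iff.mp h]
    simp

lemma coeff_pderiv_iterate (i : Fin n) (k : ℕ) (m : Fin n →₀ ℕ) (F : MvPolynomial (Fin n) ℂ) :
    coeff m ((fun p => pderiv i p)^[k] F)
      = ((∏ j ∈ Finset.range k, (m i + 1 + j)) : ℕ) * coeff (m + Finsupp.single i k) F := by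
  induction k generalizing m with
  | zero => simp
  | succ k ih =>
    rw [Function.iterate_succ_apply', coeff_pderiv, ih]
    have h1 : ((m + Finsupp.single i 1 : Fin n →₀ ℕ)) i = m i + 1 := by simp
    have h2 : m + Finsupp.single i 1 + Finsupp.single i k = m + Finsupp.single i (k + 1) := by
      rw [add_assoc, ← Finsupp.single_add, add_comm 1 k]
    rw [h1, h2, ← mul_assoc, ← Nat.cast_mul]
    congr 2
    rw [Finset.prod_range_succ']
    simp_rw [mul_comm]
    congr 1
    exact Finset.prod_congr rfl fun j _ => by omega

lemma coeff_mderiv_zero (a : Fin n → ℕ) (F : MvPolynomial (Fin n) ℂ) :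
    coeff 0 (mderiv a F)
      = ((∏ i, (a i).factorial : ℕ)) * coeff (∑ i, Finsupp.single i (a i)) F := by
  classical
  suffices h : ∀ L : List (Fin n), L.Nodup → ∀ m : Fin n →₀ ℕ, (∀ i ∈ L, m i = 0) →
      coeff m (L.foldr (fun i acc => (fun p => pderiv i p)^[a i] acc) F)
        = ((∏ i ∈ L.toFinset, (a i).factorial : ℕ))
          * coeff (m + ∑ i ∈ L.toFinset, Finsupp.single i (a i)) F by
    have := h (List.finRange n) (List.nodup_finRange n) 0 (by simp)
    simpa [mderiv] using this
  intro L
  induction L with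
  | nil => simp
  | cons i L ihL =>
    intro hnd m hm
    have hiL : i ∉ L := (List.nodup_cons.mp hnd).1
    rw [List.foldr_cons, coeff_pderiv_iterate, ihL (List.nodup_cons.mp hnd).2 _ ?_]
    · rw [← mul_assoc, ← Nat.cast_mul]
      have hmi : m i = 0 := hm i (by simp)
      have hfac : (∏ j ∈ Finset.range (a i), (m i + 1 + j)) = (a i).factorial := by
        rw [hmi]
        rw [← Finset.prod_range_add_one_eq_factorial]
        exact Finset.prod_congr rfl fun j _ => by omega
      have htf : (i :: L).toFinset = insert i L.toFinset := by simp
      rw [hfac, htf, Finset.prod_insert (by simpa using hiL),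
        Finset.sum_insert (by simpa using hiL), ← add_assoc]
    · intro j hj
      have : j ≠ i := fun h => hiL (h ▸ hj)
      simp [Finsupp.single_apply, this, hm j (List.mem_cons_of_mem _ hj), Ne.symm this]

lemma tshift_X (r : Fin n → ℂ) (i : Fin n) : tshift r (X i) = X i + C (r i) := by
  simp [tshift]

lemma tshift_C (r : Fin n → ℂ) (c : ℂ) : tshift r (C c) = C c := by
  simp [tshift, algebraMap_eq]

lemma pderiv_tshift (r : Fin n → ℂ) (i : Fin n) (F : MvPolynomial (Fin n) ℂ) :
    pderiv i (tshift r F) = tshift r (pderiv i F) := by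
  induction F using MvPolynomial.induction_on with
  | C c => rw [tshift_C, pderiv_C]; simp
  | add p q hp hq => rw [map_add, map_add, hp, hq, map_add, map_add]
  | mul_X p j hp =>
    rw [_root_.map_mul, pderiv_mul, pderiv_mul, map_add, _root_.map_mul, _root_.map_mul, hp]
    congr 2
    rcases eq_or_ne i j with h | h
    · subst h; simp [tshift_X]
    · rw [pderiv_X_of_ne (Ne.symm h), tshift_X, map_zero, map_add, pderiv_C]
      simp [pderiv_X_of_ne (Ne.symm h)]

lemma mderiv_tshift (r : Fin n → ℂ) (a : Fin n → ℕ) (F : MvPolynomial (Fin n) ℂ) :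
    mderiv a (tshift r F) = tshift r (mderiv a F) := by
  unfold mderiv
  induction List.finRange n with
  | nil => simp
  | cons i L ih =>
    rw [List.foldr_cons, List.foldr_cons, ih]
    generalize (List.foldr (fun i acc => (fun p => pderiv i p)^[a i] acc) F L) = G
    induction a i with
    | zero => simp
    | succ k ihk => rw [Function.iterate_succ_apply', Function.iterate_succ_apply', ihk,
        pderiv_tshift]

lemma eval_zero_tshift (r : Fin n → ℂ) (F : MvPolynomial (Fin n) ℂ) :
    eval 0 (tshift r F) = eval r F := by
  have h : (eval (0 : Fin n → ℂ)).comp (tshift r : MvPolynomial (Fin n) ℂ →+* _) = eval r := by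
    apply MvPolynomial.ringHom_ext
    · intro c; simp [tshift_C]
    · intro i; simp [tshift_X]
  exact RingHom.congr_fun h F

def toFs (a : Fin n → ℕ) : Fin n →₀ ℕ := ∑ i, Finsupp.single i (a i)

lemma toFs_apply (a : Fin n → ℕ) (j : Fin n) : toFs a j = a j := by
  classical
  rw [toFs, Finsupp.finset_sum_apply]
  simp [Finsupp.single_apply]

lemma eval_mderiv_eq (r : Fin n → ℂ) (a : Fin n → ℕ) (F : MvPolynomial (Fin n) ℂ) :
    eval r (mderiv a F)
      = ((∏ i, (a i).factorial : ℕ)) * coeff (toFs a) (tshift r F) := by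
  rw [← eval_zero_tshift r (mderiv a F), ← mderiv_tshift,
    show eval (0 : Fin n → ℂ) (mderiv a (tshift r F)) = coeff 0 (mderiv a (tshift r F)) from by
      rw [eval_zero, constantCoeff_eq],
    coeff_mderiv_zero]
  rfl

lemma finsupp_sum_one {μ : Fin n →₀ ℕ} (h : (∑ i, μ i) = 1) :
    ∃ j, μ = Finsupp.single j 1 := by
  classical
  obtain ⟨j, -, hj⟩ := Finset.exists_ne_zero_of_sum_ne_zero (h ▸ one_ne_zero)
  refine ⟨j, Finsupp.ext fun i => ?_⟩
  have hs : (∑ i ∈ Finset.univ.erase j, μ i) + μ j = 1 := by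
    rw [Finset.sum_erase_add _ _ (Finset.mem_univ j)]; exact h
  have hμj : μ j = 1 := by omega
  rcases eq_or_ne i j with rfl | hij
  · simp [hμj]
  · have : ∑ i ∈ Finset.univ.erase j, μ i = 0 := by omega
    have hz := (Finset.sum_eq_zero_iff.mp this) i (by simp [hij])
    simp [Finsupp.single_apply, Ne.symm hij, hz]

lemma main_induction (d : Fin n → ℕ) (D : ℕ) (w : Fin n → MvPolynomial (Fin n) ℂ)
    (hd1 : ∀ i, 1 ≤ d i) (good : Fin n → Prop)
    (H1 : ∀ α, good α → ∀ m : Fin n →₀ ℕ, coeff m (w α) ≠ 0 →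
      ∃ k, (∑ i, m i * d i) = d α + k * D)
    (H2 : ∀ α, good α → ∀ β, coeff (Finsupp.single β 1) (w α) = if α = β then 1 else 0)
    (N : ℕ) :
    ∀ b : Fin n → ℕ, (∑ i, b i) = N → (∀ α, b α ≠ 0 → good α) →
    ∀ μ : Fin n →₀ ℕ, coeff μ (∏ α, w α ^ b α) ≠ 0 →
      (∃ k, (∑ i, μ i * d i) = (∑ i, b i * d i) + k * D) ∧
      (∑ i, b i) ≤ (∑ i, μ i) ∧ ((∑ i, μ i) = (∑ i, b i) → ∀ i, μ i = b i) := by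
  classical
  induction N with
  | zero =>
    intro b hb _ μ hμ
    have hb0 : ∀ i, b i = 0 := fun i => Finset.sum_eq_zero_iff.mp hb i (Finset.mem_univ i)
    have hprod : (∏ α, w α ^ b α) = 1 := by
      rw [Finset.prod_eq_one]; intro i _; rw [hb0 i, pow_zero]
    rw [hprod, coeff_one] at hμ
    have hμ0 : μ = 0 := by by_contra hne; simp [Ne.symm hne] at hμ
    subst hμ0
    simp [hb0]
  | succ N ih =>
    intro b hb hgood μ hμ
    have hbne : ∃ α₀, b α₀ ≠ 0 := by
      by_contra h
      push_neg at h
      simp [h] at hb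
    obtain ⟨α₀, hα₀⟩ := hbne
    set b' : Fin n → ℕ := Function.update b α₀ (b α₀ - 1) with hb'def
    have hb'α₀ : b' α₀ = b α₀ - 1 := Function.update_self _ _ _
    have hb'ne : ∀ i ≠ α₀, b' i = b i := fun i hi => Function.update_of_ne hi _ _
    have hsplit : (∏ α, w α ^ b α) = w α₀ * ∏ α, w α ^ b' α := by
      rw [← Finset.mul_prod_erase Finset.univ _ (Finset.mem_univ α₀),
        ← Finset.mul_prod_erase Finset.univ _ (Finset.mem_univ α₀)]
      rw [show w α₀ ^ b α₀ = w α₀ * w α₀ ^ b' α₀ by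
        rw [hb'α₀, ← pow_succ']
        congr 1
        omega]
      rw [mul_assoc]
      congr 2
      exact Finset.prod_congr rfl fun i hi => by
        rw [hb'ne i (Finset.ne_of_mem_erase hi)]
    rw [hsplit, coeff_mul] at hμ
    obtain ⟨⟨u, v⟩, huv, hne⟩ := Finset.exists_ne_zero_of_sum_ne_zero hμ
    rw [Finset.HasAntidiagonal.mem_antidiagonal] at huv
    have hu : coeff u (w α₀) ≠ 0 := fun h => hne (by rw [h, zero_mul])
    have hv : coeff v (∏ α, w α ^ b' α) ≠ 0 := fun h => hne (by rw [h, mul_zero])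
    have hg0 : good α₀ := hgood α₀ hα₀
    obtain ⟨k₁, hk₁⟩ := H1 α₀ hg0 u hu
    have hsumb' : (∑ i, b' i) = N := by
      have h1 : (∑ i ∈ Finset.univ.erase α₀, b' i) + b' α₀ = ∑ i, b' i :=
        Finset.sum_erase_add _ _ (Finset.mem_univ α₀)
      have h2 : (∑ i ∈ Finset.univ.erase α₀, b i) + b α₀ = ∑ i, b i :=
        Finset.sum_erase_add _ _ (Finset.mem_univ α₀)
      have h3 : (∑ i ∈ Finset.univ.erase α₀, b' i) = ∑ i ∈ Finset.univ.erase α₀, b i :=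
        Finset.sum_congr rfl fun i hi => hb'ne i (Finset.ne_of_mem_erase hi)
      omega
    have hgood' : ∀ α, b' α ≠ 0 → good α := by
      intro α hα
      rcases eq_or_ne α α₀ with rfl | hne'
      · exact hg0
      · exact hgood α (by rwa [hb'ne α hne'] at hα)
    obtain ⟨⟨k₂, hk₂⟩, hle, heq⟩ := ih b' hsumb' hgood' v hv
    have hμuv : ∀ i, μ i = u i + v i := by
      intro i; rw [← huv]; rfl
    have hsum_d : (∑ i, μ i * d i) = (∑ i, u i * d i) + (∑ i, v i * d i) := by
      rw [← Finset.sum_add_distrib]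
      exact Finset.sum_congr rfl fun i _ => by rw [hμuv i, add_mul]
    have hsum_tot : (∑ i, μ i) = (∑ i, u i) + (∑ i, v i) := by
      rw [← Finset.sum_add_distrib]
      exact Finset.sum_congr rfl fun i _ => hμuv i
    have hbd : (∑ i, b i * d i) = (∑ i, b' i * d i) + d α₀ := by
      have h1 : (∑ i ∈ Finset.univ.erase α₀, b' i * d i) + b' α₀ * d α₀ = ∑ i, b' i * d i :=
        Finset.sum_erase_add _ _ (Finset.mem_univ α₀)
      have h2 : (∑ i ∈ Finset.univ.erase α₀, b i * d i) + b α₀ * d α₀ = ∑ i, b i * d i :=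
        Finset.sum_erase_add _ _ (Finset.mem_univ α₀)
      have h3 : (∑ i ∈ Finset.univ.erase α₀, b' i * d i)
          = ∑ i ∈ Finset.univ.erase α₀, b i * d i :=
        Finset.sum_congr rfl fun i hi => by rw [hb'ne i (Finset.ne_of_mem_erase hi)]
      have h4 : b' α₀ * d α₀ + d α₀ = b α₀ * d α₀ := by
        have : b' α₀ + 1 = b α₀ := by omega
        calc b' α₀ * d α₀ + d α₀ = (b' α₀ + 1) * d α₀ := by ring
        _ = b α₀ * d α₀ := by rw [this]
      omega
    have husum1 : 1 ≤ ∑ i, u i := by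
      by_contra h
      have : ∀ i, u i = 0 := by
        intro i
        have := Finset.sum_eq_zero_iff.mp (by omega : (∑ i, u i) = 0) i (Finset.mem_univ i)
        exact this
      have : (∑ i, u i * d i) = 0 := Finset.sum_eq_zero fun i _ => by rw [this i, zero_mul]
      have hd0 : 1 ≤ d α₀ := hd1 α₀
      omega
    refine ⟨⟨k₁ + k₂, ?_⟩, ?_, ?_⟩
    · rw [hsum_d, hk₁, hk₂, hbd]; ring
    · rw [hsum_tot, hb, hsumb'] at *
      omega
    · intro htot
      have h1 : (∑ i, u i) = 1 ∧ (∑ i, v i) = ∑ i, b' i := by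
        constructor <;> omega
      obtain ⟨hu1, hv1⟩ := h1
      obtain ⟨j, hj⟩ := finsupp_sum_one hu1
      have hjα₀ : j = α₀ := by
        by_contra hne'
        rw [hj, H2 α₀ hg0 j, if_neg (fun h => hne' h.symm)] at hu
        exact hu rfl
      subst hjα₀
      have hveq := heq hv1
      intro i
      rw [hμuv i, hveq i, hj]
      rcases eq_or_ne i j with rfl | hne'
      · simp [Finsupp.single_apply]
        omega
      · simp [Finsupp.single_apply, Ne.symm hne', hb'ne i hne']

lemma homog_sum_univ {F : MvPolynomial (Fin n) ℂ} {k : ℕ} (h : F.IsHomogeneous k)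
    {m : Fin n →₀ ℕ} (hm : coeff m F ≠ 0) : (∑ i, m i) = k := by
  have h1 := h hm
  rw [Finsupp.weight_apply] at h1
  simp only [Finsupp.sum, Pi.one_apply, smul_eq_mul, mul_one] at h1
  rw [← h1]
  exact (Finset.sum_subset (Finset.subset_univ _)
    fun i _ hi => Finsupp.notMem_support_iff.mp hi).symm

lemma coeff_linear (c : Fin n → ℂ) (k : Fin n) :
    coeff (Finsupp.single k 1) (∑ j, C (c j) * X j) = c k := by
  classical
  rw [coeff_sum]
  simp_rw [coeff_C_mul, coeff_X', Finsupp.single_left_inj (one_ne_zero (α := ℕ))]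
  simp

lemma eigen_coeff {c : Fin n → ℂ} {F : MvPolynomial (Fin n) ℂ} {lam : ℂ}
    (h : pback (diagonal c) F = C lam * F) {m : Fin n →₀ ℕ} (hm : coeff m F ≠ 0) :
    (∏ i, c i ^ m i) = lam := by
  have h1 := congrArg (coeff m) h
  rw [coeff_pback_diag, coeff_C_mul] at h1
  exact mul_right_cancel₀ hm h1
theorem stmt_6 [NeZero n] (G : Subgroup (GL (Fin n) ℂ)) (hG : IsReflectionGroup G)
    (d : Fin n → ℕ) (hd : Antitone d)
    (x : Fin n → MvPolynomial (Fin n) ℂ) (hx : BasicInvariants G d x)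
    (g : GL (Fin n) ℂ) (ζ : ℂ) (q : Fin n → ℂ) (hT : AdmissibleTriplet G d g ζ q)
    (P : GL (Fin n) ℂ) (hP : GradedCoords g ζ d P) (hc : Compatible P q x)
    (a b : Fin n → ℕ) (hb : ∀ α, d α = d 0 → b α = 0)
    (hnz : zderivAt P a (∏ α, x α ^ b α) q ≠ 0) :
    ((∑ α, b α) < (∑ α, a α) ∧
      ∃ k : ℕ, (∑ α, a α * d α) = (∑ α, b α * d α) + k * d 0) ∨ a = b := by
  classical
  have hd0pos : 0 < d 0 := hx.pos 0
  have hζ1 : ζ ^ d 0 = 1 := hT.prim.pow_eq_one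
  have hζ0 : ζ ≠ 0 := hT.prim.ne_zero hd0pos.ne'
  set r : Fin n → ℂ := P.val *ᵥ q with hrdef
  set Dm : Matrix (Fin n) (Fin n) ℂ := diagonal (fun β => ζ ^ (d β - 1)) with hDmdef
  set E : Matrix (Fin n) (Fin n) ℂ := diagonal (fun β => ζ ^ d β) with hEdef
  -- matrix identity P g⁻¹ = Dm P
  have hmat : P.val * (g⁻¹).val = Dm * P.val := by
    ext α k
    have h := hP α
    have hcp : coordPoly P α = pback P.val (X α) := by rw [pback_X]; rfl
    rw [hcp, pback_pback] at h
    have h2 := congrArg (coeff (Finsupp.single k 1)) h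
    rw [pback_X, coeff_linear, coeff_C_mul, pback_X, coeff_linear] at h2
    rw [Matrix.diagonal_mul, h2]
    congr 1
    rw [show ((d α : ℤ) - 1) = ((d α - 1 : ℕ) : ℤ) from by
      have := hx.pos α; omega, zpow_natCast]
  have hPinvP : (P⁻¹).val * P.val = 1 := P.inv_mul
  have hPPinv : P.val * (P⁻¹).val = 1 := P.mul_inv
  -- eigenvector facts
  have hgq : (g⁻¹).val *ᵥ q = ζ⁻¹ • q := by
    have h2 : (g⁻¹).val *ᵥ (g.val *ᵥ q) = q := by
      rw [Matrix.mulVec_mulVec, g.inv_mul, Matrix.one_mulVec]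
    rw [hT.eig, Matrix.mulVec_smul] at h2
    have h3 := congrArg (fun v : Fin n → ℂ => ζ⁻¹ • v) h2
    simpa [smul_smul, inv_mul_cancel₀ hζ0] using h3
  have hEr : ∀ i, ζ ^ d i * r i = r i := by
    intro i
    have h3 : P.val *ᵥ ((g⁻¹).val *ᵥ q) = Dm *ᵥ (P.val *ᵥ q) := by
      rw [Matrix.mulVec_mulVec, Matrix.mulVec_mulVec, hmat]
    rw [hgq, Matrix.mulVec_smul] at h3
    have h4 := congrFun h3 i
    simp only [Pi.smul_apply, smul_eq_mul, hDmdef, Matrix.mulVec_diagonal] at h4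
    have h5 : d i = (d i - 1) + 1 := by have := hx.pos i; omega
    calc ζ ^ d i * r i = ζ * (ζ ^ (d i - 1) * r i) := by
          rw [show (ζ ^ d i) = ζ ^ (d i - 1) * ζ from by rw [← pow_succ, ← h5]]; ring
    _ = ζ * (ζ⁻¹ * r i) := by rw [← h4]
    _ = r i := by field_simp
  -- the polynomials W and wp
  set W : Fin n → MvPolynomial (Fin n) ℂ := fun α => pback (P⁻¹).val (x α) with hWdef
  set wp : Fin n → MvPolynomial (Fin n) ℂ := fun α => tshift r (W α) with hwpdef
  have hmat2 : (P⁻¹).val * Dm = (g⁻¹).val * (P⁻¹).val := by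
    calc (P⁻¹).val * Dm = (P⁻¹).val * Dm * (P.val * (P⁻¹).val) := by
          rw [hPPinv, Matrix.mul_one]
    _ = (P⁻¹).val * (Dm * P.val) * (P⁻¹).val := by
          rw [Matrix.mul_assoc ((P⁻¹).val) Dm _, Matrix.mul_assoc, Matrix.mul_assoc]
    _ = (P⁻¹).val * (P.val * (g⁻¹).val) * (P⁻¹).val := by rw [hmat]
    _ = ((P⁻¹).val * P.val) * ((g⁻¹).val * (P⁻¹).val) := by
          rw [Matrix.mul_assoc, Matrix.mul_assoc, Matrix.mul_assoc]
    _ = (g⁻¹).val * (P⁻¹).val := by rw [hPinvP, Matrix.one_mul]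
  have hWD : ∀ α, pback Dm (W α) = W α := by
    intro α
    show pback Dm (pback (P⁻¹).val (x α)) = _
    rw [pback_pback, hmat2,
      show pback ((g⁻¹).val * (P⁻¹).val) (x α)
          = pback (P⁻¹).val (pback (g⁻¹).val (x α)) from (pback_pback _ _ _).symm,
      hx.invariant g⁻¹ (inv_mem hT.reg.1) α]
  have hhom : ∀ α, (W α).IsHomogeneous (d α) := fun α => pback_isHomogeneous _ (hx.homog α)
  have hWsupp : ∀ α (m : Fin n →₀ ℕ), coeff m (W α) ≠ 0 →
      ζ ^ (∑ i, m i * d i) = ζ ^ d α := by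
    intro α m hm
    have h2 : (∏ i, (ζ ^ (d i - 1)) ^ m i) = 1 :=
      eigen_coeff (show pback (diagonal fun i => ζ ^ (d i - 1)) (W α) = C 1 * W α from by
        rw [← hDmdef, hWD α, C_1, one_mul]) hm
    have hsum : (∑ i, m i) = d α := homog_sum_univ (hhom α) hm
    rw [show (∏ i, (ζ ^ (d i - 1)) ^ m i) = ζ ^ (∑ i, (d i - 1) * m i) from by
      simp_rw [← pow_mul]; rw [Finset.prod_pow_eq_pow_sum]] at h2
    have hsplit : (∑ i, m i * d i) = (∑ i, (d i - 1) * m i) + ∑ i, m i := by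
      rw [← Finset.sum_add_distrib]
      refine Finset.sum_congr rfl fun i _ => ?_
      have h5 : d i = (d i - 1) + 1 := by have := hx.pos i; omega
      calc m i * d i = m i * ((d i - 1) + 1) := by rw [← h5]
      _ = (d i - 1) * m i + m i := by ring
    rw [hsplit, pow_add, h2, one_mul, hsum]
  -- commuting the shift with the diagonal action
  have hshift_comm : ∀ F : MvPolynomial (Fin n) ℂ,
      pback E (tshift r F) = tshift r (pback E F) := by
    have h : ((pback E).comp (tshift r) : MvPolynomial (Fin n) ℂ →ₐ[ℂ] _)
        = (tshift r).comp (pback E) := by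
      apply MvPolynomial.algHom_ext
      intro i
      simp only [AlgHom.comp_apply, tshift_X, hEdef, pback_diag, map_add, pback_C,
        _root_.map_mul, tshift_C]
      rw [mul_add, ← C_mul, hEr i]
    intro F
    exact congrArg (fun φ => φ F) (congrArg DFunLike.coe h)
  have hWE : ∀ α, pback E (W α) = C (ζ ^ d α) * W α := by
    intro α
    apply MvPolynomial.ext
    intro m
    rw [hEdef, coeff_pback_diag, coeff_C_mul]
    rcases eq_or_ne (coeff m (W α)) 0 with h | h
    · rw [h, mul_zero, mul_zero]
    · congr 1
      rw [show (∏ i, (ζ ^ d i) ^ m i) = ζ ^ (∑ i, m i * d i) from by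
        simp_rw [← pow_mul]
        rw [← Finset.prod_pow_eq_pow_sum]
        exact Finset.prod_congr rfl fun i _ => by rw [mul_comm]]
      exact hWsupp α m h
  have hwpE : ∀ α, pback E (wp α) = C (ζ ^ d α) * wp α := by
    intro α
    show pback E (tshift r (W α)) = _
    rw [hshift_comm, hWE, _root_.map_mul, tshift_C]
  have hwp_supp : ∀ α (m : Fin n →₀ ℕ), coeff m (wp α) ≠ 0 →
      ζ ^ (∑ i, m i * d i) = ζ ^ d α := by
    intro α m hm
    have h2 := eigen_coeff (hEdef ▸ hwpE α) hm
    rw [show (∏ i, (ζ ^ d i) ^ m i) = ζ ^ (∑ i, m i * d i) from by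
      simp_rw [← pow_mul]
      rw [← Finset.prod_pow_eq_pow_sum]
      exact Finset.prod_congr rfl fun i _ => by rw [mul_comm]] at h2
    exact h2
  -- condition H1 of the combinatorial lemma
  have H1 : ∀ α, d α ≠ d 0 → ∀ m : Fin n →₀ ℕ, coeff m (wp α) ≠ 0 →
      ∃ k, (∑ i, m i * d i) = d α + k * d 0 := by
    intro α hα m hm
    have hζeq := hwp_supp α m hm
    have hdle : d α ≤ d 0 := hd (Fin.zero_le α)
    have hdlt : d α < d 0 := lt_of_le_of_ne hdle hα
    set s := ∑ i, m i * d i with hs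
    set t := d α with ht
    have hdt : (d 0 - 1) * t + t = d 0 * t := by
      calc (d 0 - 1) * t + t = ((d 0 - 1) + 1) * t := by ring
      _ = d 0 * t := by congr 1; omega
    have hdt' : t + (d 0 - 1) * t = d 0 * t := by rw [add_comm]; exact hdt
    have h1 : ζ ^ (s + (d 0 - 1) * t) = 1 := by
      rw [pow_add, hζeq, ← pow_add, hdt', pow_mul, hζ1, one_pow]
    have h2 : d 0 ∣ s + (d 0 - 1) * t := hT.prim.dvd_of_pow_eq_one _ h1
    have h3 : (s + (d 0 - 1) * t + t) % d 0 = (0 + t) % d 0 :=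
      Nat.ModEq.add_right t ((Nat.modEq_zero_iff_dvd).mpr h2)
    rw [add_assoc, hdt, Nat.add_mul_mod_self_left, zero_add] at h3
    have htmod : t % d 0 = t := Nat.mod_eq_of_lt hdlt
    refine ⟨s / d 0, ?_⟩
    have h4 := Nat.div_add_mod s (d 0)
    rw [h3, htmod] at h4
    calc s = d 0 * (s / d 0) + t := h4.symm
    _ = t + s / d 0 * d 0 := by ring
  -- condition H2 : compatibility
  have H2 : ∀ α β, coeff (Finsupp.single β 1) (wp α) = if α = β then 1 else 0 := by
    intro α β
    have h := hc α β
    rw [zderivAt, eval_mderiv_eq] at h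
    have hprod1 : (∏ i, (unitIdx β i).factorial) = 1 :=
      Finset.prod_eq_one fun i _ => by unfold unitIdx; split <;> simp
    have htofs : toFs (unitIdx β) = Finsupp.single β 1 := by
      apply Finsupp.ext
      intro j
      rw [toFs_apply, Finsupp.single_apply]
      unfold unitIdx
      rcases eq_or_ne j β with rfl | hne
      · simp
      · simp [hne, Ne.symm hne]
    rw [hprod1, htofs, Nat.cast_one, one_mul] at h
    exact h
  -- the coefficient from the hypothesis
  have hco : coeff (toFs a) (∏ α, wp α ^ b α) ≠ 0 := by
    have h := hnz
    rw [zderivAt, eval_mderiv_eq] at h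
    have hsp : tshift r (pback (P⁻¹).val (∏ α, x α ^ b α)) = ∏ α, wp α ^ b α := by
      rw [map_prod, map_prod]
      exact Finset.prod_congr rfl fun α _ => by rw [map_pow, map_pow]
    rw [hsp] at h
    intro h0
    rw [h0, mul_zero] at h
    exact h rfl
  have hgood : ∀ α, b α ≠ 0 → d α ≠ d 0 := fun α h hdd => h (hb α hdd)
  obtain ⟨⟨k, hk⟩, hle, heq⟩ := main_induction d (d 0) wp (fun i => hx.pos i)
    (fun α => d α ≠ d 0) H1 (fun α _ β => H2 α β) (∑ i, b i) b rfl hgood (toFs a) hco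
  simp only [toFs_apply] at hk hle heq
  rcases eq_or_ne (∑ i, a i) (∑ i, b i) with he | hne
  · right
    exact funext (heq he)
  · left
    exact ⟨lt_of_le_of_ne hle (Ne.symm hne), ⟨k, hk⟩⟩

end
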